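/- arXiv:0902.0829 — 2 statements merged into one kernel-verified Lean document; each statement's English description precedes it below -/
import Mathlib

section
/- The function d : ℝ² → ℝ given by d(x,y) = hyperbolic distance in the upper half-plane between i·e^x and 1 + i·e^y is strictly convex; that is, for all distinct (x₀,y₀), (x₁,y₁) ∈ ℝ² and every t ∈ (0,1), d(t·x₀ + (1−t)·x₁, t·y₀ + (1−t)·y₁) < t·d(x₀,y₀) + (1−t)·d(x₁,y₁). -/
/-!
Since `cosh d(x, y) = cosh (x - y) + exp (-(x + y)) / 2`, the restriction of `d` to a segment is
`s ↦ arcosh (F s)` with `F s = cosh (a * s + b) + exp (-(c * s + d)) / 2` and `(a, c) ≠ 0`.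
Now `(arcosh ∘ F)'' = (F'' (F ^ 2 - 1) - F F' ^ 2) / (F ^ 2 - 1) ^ (3 / 2)`, and for this `F`
the numerator times `cosh (a * s + b)` is an explicit sum of squares with a positive term, by
`cosh ^ 2 - sinh ^ 2 = 1`.
-/

open UpperHalfPlane

/-- The point `i·e^x` of the upper half-plane. -/
noncomputable def ptA (x : ℝ) : UpperHalfPlane :=
  ⟨(Real.exp x : ℂ) * Complex.I, by simp [Complex.mul_I_im, Complex.exp_ofReal_re, Real.exp_pos]⟩

/-- The point `1 + i·e^y` of the upper half-plane. -/
noncomputable def ptB (y : ℝ) : UpperHalfPlane :=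
  ⟨1 + (Real.exp y : ℂ) * Complex.I, by
    simp [Complex.add_im, Complex.mul_I_im, Complex.exp_ofReal_re, Real.exp_pos]⟩

/-- The hyperbolic distance between `i·e^x` and `1 + i·e^y`. -/
noncomputable def hypd (x y : ℝ) : ℝ := dist (ptA x) (ptB y)

open Real Set

theorem strictConvexOn_univ_arcosh_comp {F F' F'' : ℝ → ℝ}
    (hF : ∀ s, HasDerivAt F (F' s) s) (hF' : ∀ s, HasDerivAt F' (F'' s) s)
    (hF_gt : ∀ s, 1 < F s) (hF'' : ∀ s, F s * F' s ^ 2 < F'' s * (F s ^ 2 - 1)) :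
    StrictConvexOn ℝ univ (fun s => arcosh (F s)) := by
  set G : ℝ → ℝ := fun s => √(F s ^ 2 - 1)
  have hG_pos : ∀ s, 0 < G s := fun s => sqrt_pos.2 (by nlinarith [hF_gt s])
  have hG_sq : ∀ s, G s ^ 2 = F s ^ 2 - 1 := fun s => sq_sqrt (by nlinarith [hF_gt s])
  have hφ : ∀ s, HasDerivAt (fun s => arcosh (F s)) (F' s / G s) s := fun s =>
    ((hasDerivAt_arcosh (hF_gt s)).comp s (hF s)).congr_deriv (inv_mul_eq_div _ _)
  have hG : ∀ s, HasDerivAt G (F s * F' s / G s) s := fun s => by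
    have hF_sq : F s ^ 2 - 1 ≠ 0 := by nlinarith [hF_gt s]
    refine (((hF s).fun_pow 2).sub_const 1).sqrt hF_sq |>.congr_deriv ?_
    simp only [G, Nat.cast_ofNat]
    field_simp
    ring
  have hφ' : ∀ s, HasDerivAt (fun s => F' s / G s)
      ((F'' s * (F s ^ 2 - 1) - F s * F' s ^ 2) / G s ^ 3) s := fun s => by
    refine ((hF' s).div (hG s) (hG_pos s).ne').congr_deriv ?_
    have hG_ne := (hG_pos s).ne'
    rw [← hG_sq s]
    field_simp
  refine strictConvexOn_univ_of_deriv2_pos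
    (continuous_iff_continuousAt.2 fun s => (hφ s).continuousAt) fun s => ?_
  rw [Function.iterate_succ, Function.iterate_one, Function.comp_apply,
    funext fun s => (hφ s).deriv, (hφ' s).deriv]
  exact div_pos (by linarith [hF'' s]) (pow_pos (hG_pos s) 3)

theorem cosh_add_mul_sq_lt {θ E : ℝ} (a c : ℝ) (hE : 0 < E) (hac : a ≠ 0 ∨ c ≠ 0) :
    (cosh θ + E) * (a * sinh θ - c * E) ^ 2 <
      (a ^ 2 * cosh θ + c ^ 2 * E) * ((cosh θ + E) ^ 2 - 1) := by
  have hpos : 0 < cosh θ * (a * cosh θ + c * sinh θ) ^ 2 + cosh θ * a ^ 2 +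
      E * ((a * cosh θ + c * sinh θ) ^ 2 + c ^ 2) := by
    rcases hac with ha | hc <;> positivity
  refine lt_of_sub_pos (pos_of_mul_pos_left (b := cosh θ) ?_ (cosh_pos θ).le)
  convert mul_pos hE hpos using 1
  linear_combination (c ^ 2 * E ^ 2 + c ^ 2 * cosh θ * E + a ^ 2 * cosh θ * E +
    a ^ 2 * cosh θ ^ 2) * cosh_sq_sub_sinh_sq θ

theorem strictConvexOn_univ_arcosh_cosh_add_exp {a c : ℝ} (b d : ℝ) (hac : a ≠ 0 ∨ c ≠ 0) :
    StrictConvexOn ℝ univ fun s => arcosh (cosh (a * s + b) + exp (-(c * s + d)) / 2) := by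
  have hlin : ∀ m n s : ℝ, HasDerivAt (fun s => m * s + n) m s := fun m n s => by
    simpa using ((hasDerivAt_id s).const_mul m).add_const n
  refine strictConvexOn_univ_arcosh_comp
    (F' := fun s => a * sinh (a * s + b) - c * (exp (-(c * s + d)) / 2))
    (F'' := fun s => a ^ 2 * cosh (a * s + b) + c ^ 2 * (exp (-(c * s + d)) / 2))
    (fun s => ?_) (fun s => ?_) (fun s => ?_) (fun s => ?_)
  · refine ((hlin a b s).cosh.add ((hlin c d s).fun_neg.exp.div_const 2)).congr_deriv ?_
    ring
  · refine (((hlin a b s).sinh.const_mul a).sub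
      (((hlin c d s).fun_neg.exp.div_const 2).const_mul c)).congr_deriv ?_
    ring
  · linarith [one_le_cosh (a * s + b), exp_pos (-(c * s + d))]
  · exact cosh_add_mul_sq_lt a c (by positivity) hac

@[simp] theorem ptA_re (x : ℝ) : (ptA x).re = 0 := by simp [ptA, UpperHalfPlane.re]

@[simp] theorem ptA_im (x : ℝ) : (ptA x).im = exp x := by
  simp [ptA, UpperHalfPlane.im, Complex.exp_ofReal_re]

@[simp] theorem ptB_re (y : ℝ) : (ptB y).re = 1 := by simp [ptB, UpperHalfPlane.re]

@[simp] theorem ptB_im (y : ℝ) : (ptB y).im = exp y := by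
  simp [ptB, UpperHalfPlane.im, Complex.exp_ofReal_re]

theorem cosh_hypd (x y : ℝ) : cosh (hypd x y) = cosh (x - y) + exp (-(x + y)) / 2 := by
  rw [hypd, cosh_dist', ptA_re, ptA_im, ptB_re, ptB_im, cosh_eq, exp_neg, exp_neg, exp_sub,
    exp_add]
  field_simp
  ring

theorem hypd_eq_arcosh (x y : ℝ) : hypd x y = arcosh (cosh (x - y) + exp (-(x + y)) / 2) := by
  rw [← cosh_hypd]
  exact (arcosh_cosh dist_nonneg).symm

theorem strictConvexOn_hypd_segment {p q : ℝ × ℝ} (hpq : p ≠ q) :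
    StrictConvexOn ℝ univ fun s => hypd (s * p.1 + (1 - s) * q.1) (s * p.2 + (1 - s) * q.2) := by
  have hac : p.1 - p.2 - (q.1 - q.2) ≠ 0 ∨ p.1 + p.2 - (q.1 + q.2) ≠ 0 := by
    by_contra! h
    exact hpq (Prod.ext (by linarith [h.1, h.2]) (by linarith [h.1, h.2]))
  convert strictConvexOn_univ_arcosh_cosh_add_exp (q.1 - q.2) (q.1 + q.2) hac using 2 with s
  rw [hypd_eq_arcosh]
  ring_nf

theorem hypd_strictConvex :
    ∀ p q : ℝ × ℝ, p ≠ q → ∀ t : ℝ, 0 < t → t < 1 →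
      hypd (t * p.1 + (1 - t) * q.1) (t * p.2 + (1 - t) * q.2) <
        t * hypd p.1 p.2 + (1 - t) * hypd q.1 q.2 := by
  intro p q hpq t ht0 ht1
  simpa using (strictConvexOn_hypd_segment hpq).2 (mem_univ 1) (mem_univ 0) one_ne_zero ht0
    (sub_pos.2 ht1) (add_sub_cancel t 1)
end

section
/- Let V₀ and V₁ be real vector spaces, let P be a linear subspace of V₀ × V₁ whose projection onto V₀ is surjective, and for x ∈ V₀ set P_x = {y ∈ V₁ : (x,y) ∈ P}. Suppose F : V₀ × V₁ → (−∞, ∞] is such that its restriction to P is strictly convex in the midpoint sense, and suppose that for every x ∈ V₀ the infimum of F(x,·) over P_x is attained, i.e. f(x) = min_{y ∈ P_x} F(x,y). Then f : V₀ → (−∞, ∞] is strictly convex in the midpoint sense: for all x₀ ≠ x₁ with f(x₀), f(x₁) finite, f((x₀+x₁)/2) < (f(x₀)+f(x₁))/2. -/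
theorem minimum_strict_midpoint_convex_general
    {V₀ V₁ : Type*} [AddCommGroup V₀] [Module ℝ V₀] [AddCommGroup V₁] [Module ℝ V₁]
    (P : Submodule ℝ (V₀ × V₁))
    (F : V₀ × V₁ → EReal)
    (hF : ∀ p q : V₀ × V₁, p ∈ P → q ∈ P → p ≠ q → F p ≠ ⊤ → F q ≠ ⊤ →
      F ((2 : ℝ)⁻¹ • (p + q)) < (F p + F q) / 2)
    (f : V₀ → EReal)
    (hf : ∀ x : V₀, ∃ y : V₁, (x, y) ∈ P ∧ f x = F (x, y) ∧
      ∀ y' : V₁, (x, y') ∈ P → F (x, y) ≤ F (x, y')) :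
    ∀ x₀ x₁ : V₀, x₀ ≠ x₁ → f x₀ ≠ ⊤ → f x₀ ≠ ⊥ → f x₁ ≠ ⊤ → f x₁ ≠ ⊥ →
      f ((2 : ℝ)⁻¹ • (x₀ + x₁)) < (f x₀ + f x₁) / 2 := by
  intro x₀ x₁ hx hf₀_top _ hf₁_top _
  obtain ⟨y₀, hy₀, hf₀, -⟩ := hf x₀
  obtain ⟨y₁, hy₁, hf₁, -⟩ := hf x₁
  obtain ⟨y, -, hf_mid, hy_min⟩ := hf ((2 : ℝ)⁻¹ • (x₀ + x₁))
  rw [hf₀] at hf₀_top ⊢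
  rw [hf₁] at hf₁_top ⊢
  have h_lift : (2 : ℝ)⁻¹ • ((x₀, y₀) + (x₁, y₁)) ∈ P := P.smul_mem _ (P.add_mem hy₀ hy₁)
  calc f ((2 : ℝ)⁻¹ • (x₀ + x₁))
      ≤ F ((2 : ℝ)⁻¹ • ((x₀, y₀) + (x₁, y₁))) := hf_mid ▸ hy_min _ h_lift
    _ < (F (x₀, y₀) + F (x₁, y₁)) / 2 :=
      hF _ _ hy₀ hy₁ (fun h => hx (congrArg Prod.fst h)) hf₀_top hf₁_top

/-- **Lemma 5.5, strict convexity part.** Let `V₀`, `V₁` be real vector spaces and `P` a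
linear subspace of `V₀ × V₁` whose projection onto `V₀` is surjective.  Suppose
`F : V₀ × V₁ → (-∞, ∞]` is strictly midpoint-convex on `P`, and that for every `x` the
infimum of `F (x, ·)` over `Pₓ = {y | (x, y) ∈ P}` is attained, with value `f x`.
Then `f` is strictly midpoint-convex. -/
theorem minimum_strict_midpoint_convex
    {V₀ V₁ : Type*} [AddCommGroup V₀] [Module ℝ V₀] [AddCommGroup V₁] [Module ℝ V₁]
    (P : Submodule ℝ (V₀ × V₁))
    (hP : ∀ x : V₀, ∃ y : V₁, (x, y) ∈ P)
    (F : V₀ × V₁ → EReal)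
    (hFbot : ∀ p, F p ≠ ⊥)
    (hF : ∀ p q : V₀ × V₁, p ∈ P → q ∈ P → p ≠ q → F p ≠ ⊤ → F q ≠ ⊤ →
      F ((2 : ℝ)⁻¹ • (p + q)) < (F p + F q) / 2)
    (f : V₀ → EReal)
    (hf : ∀ x : V₀, ∃ y : V₁, (x, y) ∈ P ∧ f x = F (x, y) ∧
      ∀ y' : V₁, (x, y') ∈ P → F (x, y) ≤ F (x, y')) :
    ∀ x₀ x₁ : V₀, x₀ ≠ x₁ → f x₀ ≠ ⊤ → f x₀ ≠ ⊥ → f x₁ ≠ ⊤ → f x₁ ≠ ⊥ →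
      f ((2 : ℝ)⁻¹ • (x₀ + x₁)) < (f x₀ + f x₁) / 2 :=
  minimum_strict_midpoint_convex_general P F hF f hf
end
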